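/- arXiv:1310.5469 — 6 statements merged into one kernel-verified Lean document; each statement's English description precedes it below -/
import Mathlib

section
/- Let H be a square root of a connected graph G. If u and v are distinct pendant vertices of H that are adjacent in H to the same vertex, then u and v are true twins in G, i.e., N_G[u] = N_G[v]. -/
open SimpleGraph

variable {V : Type*}

/-- The square of a graph `H`: two distinct vertices are adjacent iff
their distance in `H` is at most `2`, i.e. they are adjacent in `H` or
have a common neighbor in `H`. -/
def squareGraph (H : SimpleGraph V) : SimpleGraph V where
  Adj a b := a ≠ b ∧ (H.Adj a b ∨ ∃ w, H.Adj a w ∧ H.Adj w b)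
  symm := by
    constructor
    rintro a b ⟨hne, h | ⟨w, h1, h2⟩⟩
    · exact ⟨hne.symm, Or.inl h.symm⟩
    · exact ⟨hne.symm, Or.inr ⟨w, h2.symm, h1.symm⟩⟩
  loopless := by constructor; rintro a ⟨hne, -⟩; exact hne rfl

/-- `H` is a square root of `G` if `H² = G`. -/
def IsSquareRoot (H G : SimpleGraph V) : Prop := squareGraph H = G

/-- A pendant vertex: a vertex with exactly one neighbor (degree 1). -/
def IsPendant (H : SimpleGraph V) (u : V) : Prop := ∃! w, H.Adj u w

/-- The closed neighborhood of a vertex. -/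
def closedNbhd (G : SimpleGraph V) (u : V) : Set V := insert u (G.neighborSet u)

/-- Two vertices are true twins if their closed neighborhoods coincide. -/
def TrueTwins (G : SimpleGraph V) (u v : V) : Prop := closedNbhd G u = closedNbhd G v

/-- `S` is an `(X,Y)`-separator of `G`: every walk in `G` from a vertex of `X`
to a vertex of `Y` meets `S`, i.e. there is no path connecting `X` to `Y`
in the graph `G - S`. -/
def IsSep (G : SimpleGraph V) (S X Y : Set V) : Prop :=
  ∀ x ∈ X, ∀ y ∈ Y, ∀ p : G.Walk x y, ∃ s ∈ p.support, s ∈ S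

/-- `S` is a minimal `(X,Y)`-separator of `G`. -/
def IsMinSep (G : SimpleGraph V) (S X Y : Set V) : Prop :=
  IsSep G S X Y ∧ ∀ S' ⊂ S, ¬ IsSep G S' X Y

theorem closedNbhd_squareGraph_of_isPendant {H : SimpleGraph V} {a w : V}
    (ha : IsPendant H a) (haw : H.Adj a w) :
    closedNbhd (squareGraph H) a = insert w (H.neighborSet w) := by
  ext x
  simp only [closedNbhd, squareGraph, Set.mem_insert_iff, mem_neighborSet]
  constructor
  · rintro (rfl | ⟨-, hax | ⟨z, haz, hzx⟩⟩)
    · exact Or.inr haw.symm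
    · exact Or.inl (ha.unique hax haw)
    · exact Or.inr (ha.unique haz haw ▸ hzx)
  · rintro (rfl | hwx)
    · exact Or.inr ⟨haw.ne, Or.inl haw⟩
    · by_cases hxa : x = a
      · exact Or.inl hxa
      · exact Or.inr ⟨Ne.symm hxa, Or.inr ⟨w, haw, hwx⟩⟩

theorem pendant_same_neighbor_true_twins_general (G H : SimpleGraph V)
    (hH : IsSquareRoot H G) (u v w : V)
    (hu : IsPendant H u) (hv : IsPendant H v)
    (huw : H.Adj u w) (hvw : H.Adj v w) :
    TrueTwins G u v := by
  subst hH
  exact (closedNbhd_squareGraph_of_isPendant hu huw).trans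
    (closedNbhd_squareGraph_of_isPendant hv hvw).symm

/-- Observation 1 ii): if `u, v` are distinct pendant vertices of a square root `H`
of a connected graph `G` that are adjacent in `H` to the same vertex `w`, then
`u` and `v` are true twins in `G`. -/
theorem pendant_same_neighbor_true_twins (G H : SimpleGraph V) (hG : G.Connected)
    (hH : IsSquareRoot H G) (u v w : V) (huv : u ≠ v)
    (hu : IsPendant H u) (hv : IsPendant H v)
    (huw : H.Adj u w) (hvw : H.Adj v w) :
    TrueTwins G u v :=
  pendant_same_neighbor_true_twins_general G H hH u v w hu hv huw hvw
end

section
/- Let G be a connected graph with a square root H. Let r ≥ 3 and let {u_1, ..., u_r} be a clique in G such that {u_1, u_2} is a minimal ({u_3, ..., u_r}, V_G ∖ {u_1, ..., u_r})-separator of G. Let {x_1, ..., x_p} = N_G(u_1) ∖ {u_1, ..., u_r} with p ≥ 1. If u_1 and u_2 are true twins in G, then either u_1x_1, ..., u_1x_p ∈ E_H or u_2x_1, ..., u_2x_p ∈ E_H. Moreover, in this case G is the union of two complete graphs with vertex sets {u_1, ..., u_r} and {u_1, u_2, x_1, ..., x_p}, and the two graphs on V_G with edge sets {u_1u_2, u_1u_3,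 ..., u_1u_r} ∪ {u_2x_1, ..., u_2x_p} and {u_2u_1, u_2u_3, ..., u_2u_r} ∪ {u_1x_1, ..., u_1x_p}, respectively, are both square roots of G. -/
open SimpleGraph

variable {V : Type*}

/-!
Let `S = {a, b}` be the twins, `C = A \ S` the rest of the clique and `X = N_G(a) \ A`. As `S`
separates `C` from `V \ A`, no vertex of `C` is `G`-adjacent to `X`. If `a` has an `H`-neighbour
in `X`, it has none in `C` (that would give a `C`–`X` edge of `H²`), so each `G`-edge `ac`,
`c ∈ C`, is an `H`-path `a b c`; then `b` has no `H`-neighbour in `X`, so each `G`-edge `bx`,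
`x ∈ X`, is an `H`-path `b a x`. If `a` has no `H`-neighbour in `X`, the same last step with `a`
and `b` exchanged makes `b` adjacent to all of `X`. A vertex of `S` adjacent in `H` to all of `X`
makes `S ∪ X` a clique of `G` and `A ∪ X` closed under `H`-adjacency, hence equal to `V` by
connectivity. Conversely, for `c ≠ d` in `A`, the star at `c` on `A` together with the star at `d`
on `B` squares to the union of the complete graphs on `A` and on `B ∪ {c, d}`.
-/

lemma squareGraph_adj {H : SimpleGraph V} {a b : V} :
    (squareGraph H).Adj a b ↔ a ≠ b ∧ (H.Adj a b ∨ ∃ w, H.Adj a w ∧ H.Adj w b) :=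
  Iff.rfl

lemma le_squareGraph (H : SimpleGraph V) : H ≤ squareGraph H :=
  fun _ _ h => ⟨h.ne, Or.inl h⟩

lemma squareGraph_adj_of_adj_of_adj {H : SimpleGraph V} {a b w : V} (hab : a ≠ b)
    (ha : H.Adj w a) (hb : H.Adj w b) : (squareGraph H).Adj a b :=
  ⟨hab, Or.inr ⟨w, ha.symm, hb⟩⟩

lemma mem_of_squareGraph_adj {H : SimpleGraph V} {S : Set V}
    (hS : ∀ a b, H.Adj a b → a ∈ S → b ∈ S) {a b : V} (hab : (squareGraph H).Adj a b)
    (ha : a ∈ S) : b ∈ S := by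
  rcases hab.2 with h | ⟨w, haw, hwb⟩
  · exact hS a b h ha
  · exact hS w b hwb (hS a w haw ha)

lemma SimpleGraph.Connected.mem_of_forall_adj_mem {G : SimpleGraph V} (hG : G.Connected)
    {S : Set V} {v : V} (hv : v ∈ S) (hS : ∀ a b, G.Adj a b → a ∈ S → b ∈ S) (w : V) :
    w ∈ S := by
  obtain ⟨p⟩ := hG.preconnected v w
  induction p with
  | nil => exact hv
  | cons h _ ih => exact ih (hS _ _ h hv)

lemma IsSep.mono_left {G : SimpleGraph V} {S X X' Y : Set V} (h : IsSep G S X Y)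
    (hX : X' ⊆ X) : IsSep G S X' Y :=
  fun x hx => h x (hX hx)

lemma IsSep.not_adj {G : SimpleGraph V} {S X Y : Set V} (h : IsSep G S X Y) {x y : V}
    (hx : x ∈ X) (hy : y ∈ Y) (hxS : x ∉ S) (hyS : y ∉ S) : ¬ G.Adj x y := by
  intro hxy
  obtain ⟨s, hs, hsS⟩ := h x hx y hy hxy.toWalk
  rcases List.mem_pair.mp (by simpa using hs) with rfl | rfl <;> contradiction

lemma TrueTwins.symm {G : SimpleGraph V} {a b : V} (h : TrueTwins G a b) : TrueTwins G b a :=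
  Eq.symm h

lemma TrueTwins.adj_iff {G : SimpleGraph V} {a b z : V} (h : TrueTwins G a b) (ha : z ≠ a)
    (hb : z ≠ b) : G.Adj a z ↔ G.Adj b z := by
  simpa [closedNbhd, ha, hb] using Set.ext_iff.mp h z

def completeOn (A : Set V) : SimpleGraph V := fromRel fun v w => v ∈ A ∧ w ∈ A

def starOn (c : V) (A : Set V) : SimpleGraph V := fromRel fun v w => v = c ∧ w ∈ A

lemma completeOn_adj {A : Set V} {v w : V} : (completeOn A).Adj v w ↔ v ≠ w ∧ v ∈ A ∧ w ∈ A := by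
  simp [completeOn, and_comm]

lemma starOn_adj {c v w : V} {A : Set V} :
    (starOn c A).Adj v w ↔ v ≠ w ∧ (v = c ∧ w ∈ A ∨ w = c ∧ v ∈ A) :=
  Iff.rfl

lemma completeOn_le_iff {G : SimpleGraph V} {A : Set V} : completeOn A ≤ G ↔ G.IsClique A :=
  ⟨fun h _ hv _ hw hne => h (completeOn_adj.mpr ⟨hne, hv, hw⟩),
    fun h _ _ hvw => let ⟨hne, hv, hw⟩ := completeOn_adj.mp hvw; h hv hw hne⟩

theorem squareGraph_starOn_sup_starOn {A B : Set V} {c d : V} (hcd : c ≠ d) (hc : c ∈ A)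
    (hd : d ∈ A) :
    squareGraph (starOn c A ⊔ starOn d B) = completeOn A ⊔ completeOn (insert c (insert d B)) := by
  ext v w
  simp only [squareGraph_adj, sup_adj, starOn_adj, completeOn_adj, Set.mem_insert_iff]
  refine ⟨fun h => by grind, fun h => ⟨by grind, ?_⟩⟩
  -- a non-adjacent pair in `A` is joined through `c`, one in `insert c (insert d B)` through `d`
  by_cases hv : v = c ∨ w = c ∨ v = d ∨ w = d
  · grind
  · exact Or.inr (by rcases h with h | h; exacts [⟨c, by grind⟩, ⟨d, by grind⟩])

theorem fromEdgeSet_eq_starOn_sup_starOn {ι κ : Type*} (f : ι → V) (i₀ : ι) (d : V)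
    (g : κ → V) :
    fromEdgeSet {e | (∃ i, i ≠ i₀ ∧ e = s(f i₀, f i)) ∨ ∃ j, e = s(d, g j)} =
      starOn (f i₀) (Set.range f) ⊔ starOn d (Set.range g) := by
  ext v w
  simp only [fromEdgeSet_adj, sup_adj, starOn_adj, Set.mem_ofPred_eq, Sym2.eq_iff, Set.mem_range]
  grind

/-- The configuration of the theorem: `a, b` are `u_1, u_2`, `A` is the clique `{u_1, …, u_r}`
and `X = N(u_1) \ A`. -/
structure TwinSeparatorSetting (G : SimpleGraph V) (a b : V) (A X : Set V) : Prop where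
  left_mem : a ∈ A
  right_mem : b ∈ A
  inner_nonempty : (A \ {a, b}).Nonempty
  isClique : G.IsClique A
  isSep : IsSep G {a, b} (A \ {a, b}) Aᶜ
  neighborSet_diff : G.neighborSet a \ A = X
  trueTwins : TrueTwins G a b

namespace TwinSeparatorSetting

variable {G H : SimpleGraph V} {a b c v w y z : V} {A X : Set V}

lemma mem_iff (h : TwinSeparatorSetting G a b A X) : y ∈ X ↔ G.Adj a y ∧ y ∉ A := by
  rw [← h.neighborSet_diff]; rfl

lemma symm (h : TwinSeparatorSetting G a b A X) : TwinSeparatorSetting G b a A X where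
  left_mem := h.right_mem
  right_mem := h.left_mem
  inner_nonempty := Set.pair_comm a b ▸ h.inner_nonempty
  isClique := h.isClique
  isSep := Set.pair_comm a b ▸ h.isSep
  neighborSet_diff := by
    ext z
    rw [h.mem_iff, Set.mem_sdiff, mem_neighborSet, and_congr_left_iff]
    intro hz
    exact (h.trueTwins.adj_iff (ne_of_mem_of_not_mem h.left_mem hz).symm
      (ne_of_mem_of_not_mem h.right_mem hz).symm).symm
  trueTwins := h.trueTwins.symm

lemma mem_union_of_adj (h : TwinSeparatorSetting G a b A X) (hz : G.Adj a z) : z ∈ A ∪ X := by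
  by_cases hzA : z ∈ A
  exacts [Or.inl hzA, Or.inr (h.mem_iff.mpr ⟨hz, hzA⟩)]

lemma mem_of_adj_inner (h : TwinSeparatorSetting G a b A X) (hc : c ∈ A \ {a, b})
    (hz : G.Adj c z) : z ∈ A := by
  by_contra hzA
  refine h.isSep.not_adj hc hzA hc.2 ?_ hz
  rintro (rfl | rfl)
  exacts [hzA h.left_mem, hzA h.right_mem]

lemma not_adj_inner (h : TwinSeparatorSetting G a b A X) (hc : c ∈ A \ {a, b}) (hy : y ∈ X) :
    ¬ G.Adj c y :=
  fun hcy => (h.mem_iff.mp hy).2 (h.mem_of_adj_inner hc hcy)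

lemma not_adj_inner_of_adj (h : TwinSeparatorSetting G a b A X) (hH : squareGraph H = G)
    (hy : y ∈ X) (hay : H.Adj a y) (hc : c ∈ A \ {a, b}) : ¬ H.Adj a c := fun hac =>
  h.not_adj_inner hc hy <| hH ▸
    squareGraph_adj_of_adj_of_adj (ne_of_mem_of_not_mem hc.1 (h.mem_iff.mp hy).2) hac hay

lemma adj_right_inner (h : TwinSeparatorSetting G a b A X) (hH : squareGraph H = G)
    (hnot : ∀ c ∈ A \ {a, b}, ¬ H.Adj a c) (hc : c ∈ A \ {a, b}) : H.Adj b c := by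
  have hac : (squareGraph H).Adj a c :=
    hH ▸ h.isClique h.left_mem hc.1 (fun hac => hc.2 (hac ▸ Set.mem_insert a _))
  rcases hac.2 with hac | ⟨w, haw, hwc⟩
  · exact absurd hac (hnot c hc)
  have hwA : w ∈ A := h.mem_of_adj_inner hc (hH ▸ le_squareGraph H hwc.symm)
  have hw : w = b := by
    by_contra hwb
    exact hnot w ⟨hwA, by rintro (rfl | rfl); exacts [haw.ne rfl, hwb rfl]⟩ haw
  exact hw ▸ hwc

lemma forall_adj_left_of_forall_not_adj_right (h : TwinSeparatorSetting G a b A X)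
    (hH : squareGraph H = G) (hnot : ∀ y ∈ X, ¬ H.Adj b y) : ∀ y ∈ X, H.Adj a y := by
  intro y hy
  have hby : (squareGraph H).Adj b y := hH ▸ (h.symm.mem_iff.mp hy).1
  rcases hby.2 with hby | ⟨w, hbw, hwy⟩
  · exact absurd hby (hnot y hy)
  rcases h.symm.mem_union_of_adj (hH ▸ le_squareGraph H hbw) with hwA | hwX
  · by_cases hwa : w = a
    · exact hwa ▸ hwy
    refine absurd (hH ▸ le_squareGraph H hwy) (h.not_adj_inner ⟨hwA, ?_⟩ hy)
    rintro (rfl | rfl)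
    exacts [hwa rfl, hbw.ne rfl]
  · exact absurd hbw (hnot w hwX)

lemma forall_adj_of_exists_adj (h : TwinSeparatorSetting G a b A X) (hH : squareGraph H = G)
    (hex : ∃ y ∈ X, H.Adj a y) : ∀ y ∈ X, H.Adj a y := by
  obtain ⟨y₀, hy₀, hay₀⟩ := hex
  obtain ⟨c, hc⟩ := h.inner_nonempty
  have hbc : H.Adj b c := h.adj_right_inner hH (fun _ => h.not_adj_inner_of_adj hH hy₀ hay₀) hc
  refine h.forall_adj_left_of_forall_not_adj_right hH fun y hy hby => ?_
  exact h.symm.not_adj_inner_of_adj hH hy hby (Set.pair_comm a b ▸ hc) hbc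

theorem forall_adj_or_forall_adj (h : TwinSeparatorSetting G a b A X) (hH : squareGraph H = G) :
    (∀ y ∈ X, H.Adj a y) ∨ ∀ y ∈ X, H.Adj b y := by
  by_cases hex : ∃ y ∈ X, H.Adj a y
  · exact Or.inl (h.forall_adj_of_exists_adj hH hex)
  · exact Or.inr (h.symm.forall_adj_left_of_forall_not_adj_right hH
      fun y hy hay => hex ⟨y, hy, hay⟩)

lemma mem_union_of_adj_mem_union (h : TwinSeparatorSetting G a b A X) (hH : squareGraph H = G)
    (hstar : ∀ y ∈ X, H.Adj a y) (hvw : H.Adj v w) (hv : v ∈ A ∪ X) : w ∈ A ∪ X := by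
  have hG : G.Adj v w := hH ▸ le_squareGraph H hvw
  rcases hv with hvA | hvX
  · by_cases hva : v = a
    · exact h.mem_union_of_adj (hva ▸ hG)
    by_cases hvb : v = b
    · exact h.symm.mem_union_of_adj (hvb ▸ hG)
    exact Or.inl (h.mem_of_adj_inner ⟨hvA, by rintro (rfl | rfl); exacts [hva rfl, hvb rfl]⟩ hG)
  · by_cases hwa : w = a
    · exact Or.inl (hwa ▸ h.left_mem)
    exact h.mem_union_of_adj
      (hH ▸ squareGraph_adj_of_adj_of_adj (Ne.symm hwa) (hstar v hvX).symm hvw)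

lemma mem_union (h : TwinSeparatorSetting G a b A X) (hG : G.Connected) (hH : squareGraph H = G)
    (hstar : ∀ y ∈ X, H.Adj a y) (z : V) : z ∈ A ∪ X :=
  hG.mem_of_forall_adj_mem (Or.inl h.left_mem)
    (fun _ _ hvw hv => mem_of_squareGraph_adj (fun _ _ => h.mem_union_of_adj_mem_union hH hstar)
      (hH ▸ hvw) hv) z

lemma isClique_insert_insert (h : TwinSeparatorSetting G a b A X) (hH : squareGraph H = G)
    (hstar : ∀ y ∈ X, H.Adj a y) : G.IsClique (insert a (insert b X)) := by
  refine isClique_insert.mpr ⟨isClique_insert.mpr ⟨fun y hy y' hy' hne => ?_, ?_⟩, ?_⟩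
  · exact hH ▸ squareGraph_adj_of_adj_of_adj hne (hstar y hy) (hstar y' hy')
  · exact fun y hy _ => (h.symm.mem_iff.mp hy).1
  · rintro w (rfl | hw) hne
    · exact h.isClique h.left_mem h.right_mem hne
    · exact (h.mem_iff.mp hw).1

theorem eq_completeOn_sup (h : TwinSeparatorSetting G a b A X) (hG : G.Connected)
    (hH : squareGraph H = G) (hstar : ∀ y ∈ X, H.Adj a y) :
    G = completeOn A ⊔ completeOn (insert a (insert b X)) := by
  refine le_antisymm (fun v w hvw => ?_) (sup_le (completeOn_le_iff.mpr h.isClique)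
    (completeOn_le_iff.mpr (h.isClique_insert_insert hH hstar)))
  have hv := h.mem_union hG hH hstar v
  have hw := h.mem_union hG hH hstar w
  have hno : ∀ c ∈ A \ {a, b}, ∀ y ∈ X, ¬ G.Adj c y := fun _ hc _ hy => h.not_adj_inner hc hy
  have ha := h.left_mem
  have hb := h.right_mem
  have hwv := hvw.symm
  have hne := hvw.ne
  simp only [sup_adj, completeOn_adj, Set.mem_insert_iff]
  grind

end TwinSeparatorSetting

/-- The paper's `u_1, ..., u_r` (`r ≥ 3`) is `u : Fin (r+3) → V`
and `x_1, ..., x_p` (`p ≥ 1`) is `x : Fin (p+1) → V`. -/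
theorem minimal_separator_true_twins_structure_general {r p : ℕ}
    (G H : SimpleGraph V) (hG : G.Connected) (hH : IsSquareRoot H G)
    (u : Fin (r + 3) → V) (hu : Function.Injective u)
    (hclique : G.IsClique (Set.range u))
    (hsep : IsMinSep G {u 0, u 1} (u '' {i | 2 ≤ (i : ℕ)}) (Set.range u)ᶜ)
    (x : Fin (p + 1) → V)
    (hxr : Set.range x = G.neighborSet (u 0) \ Set.range u)
    (htw : TrueTwins G (u 0) (u 1)) :
    ((∀ j, H.Adj (u 0) (x j)) ∨ (∀ j, H.Adj (u 1) (x j))) ∧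
    -- G is the union of two complete graphs with vertex sets
    -- {u_1, ..., u_r} and {u_1, u_2, x_1, ..., x_p}:
    (∀ a b : V, G.Adj a b ↔ a ≠ b ∧
      ((a ∈ Set.range u ∧ b ∈ Set.range u) ∨
       (a ∈ insert (u 0) (insert (u 1) (Set.range x)) ∧
        b ∈ insert (u 0) (insert (u 1) (Set.range x))))) ∧
    -- the two graphs with the indicated edge sets are square roots of G:
    IsSquareRoot (SimpleGraph.fromEdgeSet
      {e | (∃ i : Fin (r + 3), i ≠ 0 ∧ e = s(u 0, u i)) ∨ ∃ j, e = s(u 1, x j)}) G ∧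
    IsSquareRoot (SimpleGraph.fromEdgeSet
      {e | (∃ i : Fin (r + 3), i ≠ 1 ∧ e = s(u 1, u i)) ∨ ∃ j, e = s(u 0, x j)}) G := by
  have hS : TwinSeparatorSetting G (u 0) (u 1) (Set.range u) (Set.range x) :=
    { left_mem := ⟨0, rfl⟩
      right_mem := ⟨1, rfl⟩
      inner_nonempty := ⟨u ⟨2, by omega⟩, ⟨_, rfl⟩, by simp [hu.eq_iff, Fin.ext_iff]⟩
      isClique := hclique
      isSep := hsep.1.mono_left <| by
        rintro _ ⟨⟨i, rfl⟩, hi⟩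
        have h0 : i ≠ 0 := fun h => hi (Or.inl (congrArg u h))
        have h1 : i ≠ 1 := fun h => hi (Or.inr (congrArg u h))
        rw [Ne, Fin.ext_iff, Fin.val_zero] at h0
        rw [Ne, Fin.ext_iff, Fin.val_one] at h1
        exact ⟨i, by simp only [Set.mem_ofPred_eq]; omega, rfl⟩
      neighborSet_diff := hxr.symm
      trueTwins := htw }
  have h01 : u 0 ≠ u 1 := hu.ne (by simp)
  have hstar := hS.forall_adj_or_forall_adj hH
  have hGeq :
      G = completeOn (Set.range u) ⊔ completeOn (insert (u 0) (insert (u 1) (Set.range x))) :=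
    hstar.elim (hS.eq_completeOn_sup hG hH) fun h₁ => by
      rw [Set.insert_comm]; exact hS.symm.eq_completeOn_sup hG hH h₁
  refine ⟨by simpa only [Set.forall_mem_range] using hstar, fun a b => ?_, ?_, ?_⟩
  · rw [hGeq, sup_adj, completeOn_adj, completeOn_adj, ← and_or_left]
  · rw [IsSquareRoot, fromEdgeSet_eq_starOn_sup_starOn,
      squareGraph_starOn_sup_starOn h01 (Set.mem_range_self 0) (Set.mem_range_self 1), hGeq]
  · rw [IsSquareRoot, fromEdgeSet_eq_starOn_sup_starOn,
      squareGraph_starOn_sup_starOn h01.symm (Set.mem_range_self 1) (Set.mem_range_self 0), hGeq,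
      Set.insert_comm]

/-- Lemma 2 ii). Here the paper's `u_1, ..., u_r` (`r ≥ 3`) is `u : Fin (r+3) → V`
and `x_1, ..., x_p` (`p ≥ 1`) is `x : Fin (p+1) → V`. -/
theorem minimal_separator_true_twins_structure {r p : ℕ}
    (G H : SimpleGraph V) (hG : G.Connected) (hH : IsSquareRoot H G)
    (u : Fin (r + 3) → V) (hu : Function.Injective u)
    (hclique : G.IsClique (Set.range u))
    (hsep : IsMinSep G {u 0, u 1} (u '' {i | 2 ≤ (i : ℕ)}) (Set.range u)ᶜ)
    (x : Fin (p + 1) → V) (hx : Function.Injective x)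
    (hxr : Set.range x = G.neighborSet (u 0) \ Set.range u)
    (htw : TrueTwins G (u 0) (u 1)) :
    ((∀ j, H.Adj (u 0) (x j)) ∨ (∀ j, H.Adj (u 1) (x j))) ∧
    -- G is the union of two complete graphs with vertex sets
    -- {u_1, ..., u_r} and {u_1, u_2, x_1, ..., x_p}:
    (∀ a b : V, G.Adj a b ↔ a ≠ b ∧
      ((a ∈ Set.range u ∧ b ∈ Set.range u) ∨
       (a ∈ insert (u 0) (insert (u 1) (Set.range x)) ∧
        b ∈ insert (u 0) (insert (u 1) (Set.range x))))) ∧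
    -- the two graphs with the indicated edge sets are square roots of G:
    IsSquareRoot (SimpleGraph.fromEdgeSet
      {e | (∃ i : Fin (r + 3), i ≠ 0 ∧ e = s(u 0, u i)) ∨ ∃ j, e = s(u 1, x j)}) G ∧
    IsSquareRoot (SimpleGraph.fromEdgeSet
      {e | (∃ i : Fin (r + 3), i ≠ 1 ∧ e = s(u 1, u i)) ∨ ∃ j, e = s(u 0, x j)}) G :=
  minimal_separator_true_twins_structure_general G H hG hH u hu hclique hsep x hxr htw
end

section
/- Let G be a connected graph with a square root H. Let r ≥ 3 and let {u_1, ..., u_r} be a clique in G such that {u_1, u_2} is a minimal ({u_3, ..., u_r}, V_G ∖ {u_1, ..., u_r})-separator of G. Let {x_1, ..., x_p} = N_G(u_1) ∖ {u_1, ..., u_r} with p ≥ 1. If N_G[u_2] ∖ N_G[u_1] is nonempty, then u_2u_1, u_3u_1, ..., u_ru_1 ∈ E_H, u_3u_2, ..., u_ru_2 ∉ E_H, and u_1x_1, ..., u_1x_p ∉ E_H. Moreover, the graph H' obtained from H by deleting all edges u_iu_j with 3 ≤ i < j ≤ r is a square root of G, and in H' the set {u_1, ..., u_r} induces a star with central vertex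 u_1 whose leaves u_3, ..., u_r are pendant vertices of H'. -/
open SimpleGraph

variable {V : Type*}

/-! Write `c = u_1`, `b = u_2` and `L = {u_3, …, u_r}`. Since `{c, b}` separates `L` from the rest
of the graph, every `G`-neighbour of a vertex of `L` lies in the clique `{c, b} ∪ L`, i.e. every
vertex within `H`-distance two of `L` does. Take `w ∈ N_G[b] ∖ N_G[c]`; it lies outside the clique.
If some `ℓ ∈ L` were an `H`-neighbour of `b`, all `H`-neighbours of `b` would lie in the clique,
and none of them other than `b` can be `H`-adjacent to `w`, so `w` would not be within `H`-distance
two of `b`. Hence each edge `ℓb` of `G` comes from a path `ℓ c b` in `H`, the `H`-neighbours of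
`ℓ ∈ L` lie in `{c} ∪ L`, and any `H`-path through an edge inside `L` can be rerouted through `c`. -/

section Square

variable {H H' : SimpleGraph V} {a b z : V}

lemma squareGraph_adj_of_adj (h : H.Adj a b) : (squareGraph H).Adj a b := ⟨h.ne, Or.inl h⟩

lemma squareGraph_adj_of_adj_of_adj_s6 (hab : a ≠ b) (haz : H.Adj a z) (hzb : H.Adj z b) :
    (squareGraph H).Adj a b :=
  ⟨hab, Or.inr ⟨z, haz, hzb⟩⟩

lemma squareGraph_mono (h : H ≤ H') : squareGraph H ≤ squareGraph H' := by
  rintro a b ⟨hab, hadj | ⟨z, haz, hzb⟩⟩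
  exacts [⟨hab, Or.inl (h hadj)⟩, ⟨hab, Or.inr ⟨z, h haz, h hzb⟩⟩]

end Square

lemma SimpleGraph.IsClique.subset_closedNbhd {G : SimpleGraph V} {K : Set V}
    (hK : G.IsClique K) {a : V} (ha : a ∈ K) : K ⊆ closedNbhd G a := by
  intro v hv
  by_cases hva : v = a
  · exact hva ▸ Set.mem_insert v _
  · exact Or.inr (hK ha hv (Ne.symm hva))

lemma SimpleGraph.IsClique.exists_adj_not_adj_of_closedNbhd_diff {G : SimpleGraph V}
    {K : Set V} (hK : G.IsClique K) {a b : V} (ha : a ∈ K) (hb : b ∈ K)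
    (h : (closedNbhd G b \ closedNbhd G a).Nonempty) : ∃ w ∉ K, G.Adj b w ∧ ¬ G.Adj a w := by
  obtain ⟨w, hwb, hwa⟩ := h
  have hw : w ∉ K := fun hw => hwa (hK.subset_closedNbhd ha hw)
  exact ⟨w, hw, hwb.resolve_left fun h => hw (h ▸ hb), fun h => hwa (Or.inr h)⟩

lemma IsSep.neighborSet_subset {G : SimpleGraph V} {S X Y : Set V} (h : IsSep G S X Yᶜ)
    (hSY : S ⊆ Y) {x : V} (hx : x ∈ X) (hxS : x ∉ S) : G.neighborSet x ⊆ Y := by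
  intro y hxy
  by_contra hy
  obtain ⟨s, hs, hsS⟩ := h x hx y hy (SimpleGraph.Adj.toWalk hxy)
  rw [hxy.support_toWalk, List.mem_pair] at hs
  rcases hs with rfl | rfl
  exacts [hxS hsS, hy (hSY hsS)]

lemma Fin.eq_zero_or_eq_one_or_two_le {n : ℕ} (i : Fin (n + 2)) :
    i = 0 ∨ i = 1 ∨ 2 ≤ (i : ℕ) := by
  rcases i with ⟨_ | _ | k, hk⟩ <;> simp [Fin.ext_iff]

lemma range_eq_insert_insert_image {α : Type*} {n : ℕ} (u : Fin (n + 2) → α) :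
    Set.range u = insert (u 0) (insert (u 1) (u '' {i | 2 ≤ (i : ℕ)})) := by
  ext v
  constructor
  · rintro ⟨i, rfl⟩
    rcases i.eq_zero_or_eq_one_or_two_le with rfl | rfl | hi
    exacts [Or.inl rfl, Or.inr (Or.inl rfl), Or.inr (Or.inr ⟨i, hi, rfl⟩)]
  · rintro (rfl | rfl | ⟨i, -, rfl⟩) <;> exact ⟨_, rfl⟩

lemma IsSep.neighborSet_subset_range {G : SimpleGraph V} {n : ℕ} {u : Fin (n + 2) → V}
    (hu : Function.Injective u)
    (h : IsSep G {u 0, u 1} (u '' {i | 2 ≤ (i : ℕ)}) (Set.range u)ᶜ) :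
    ∀ ℓ ∈ u '' {i | 2 ≤ (i : ℕ)}, G.neighborSet ℓ ⊆ Set.range u := by
  rintro _ ⟨i, hi, rfl⟩
  refine h.neighborSet_subset ?_ ⟨i, hi, rfl⟩ ?_
  · rintro _ (rfl | rfl) <;> exact ⟨_, rfl⟩
  · rintro (h | h) <;> simp [hu h] at hi

section Pairs

variable {ι α : Type*} {u : ι → α} {P : ι → Prop}

lemma setOf_mk_subset_sym2_image :
    {e | ∃ i j, P i ∧ P j ∧ i ≠ j ∧ e = s(u i, u j)} ⊆ (u '' {i | P i}).sym2 := by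
  rintro _ ⟨i, j, hi, hj, -, rfl⟩
  exact ⟨⟨i, hi, rfl⟩, ⟨j, hj, rfl⟩⟩

lemma mk_mem_setOf_of_mem_image {a a' : α} (ha : a ∈ u '' {i | P i}) (ha' : a' ∈ u '' {i | P i})
    (h : a ≠ a') : s(a, a') ∈ {e | ∃ i j, P i ∧ P j ∧ i ≠ j ∧ e = s(u i, u j)} := by
  obtain ⟨⟨i, hi, rfl⟩, ⟨j, hj, rfl⟩⟩ := And.intro ha ha'
  exact ⟨i, j, hi, hj, fun hij => h (hij ▸ rfl), rfl⟩

end Pairs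

section Unbalanced

variable {H : SimpleGraph V} {c b ℓ : V} {L : Set V}

lemma not_adj_of_leaves_closed
    (hL : ∀ ℓ ∈ L, (squareGraph H).neighborSet ℓ ⊆ insert c (insert b L)) {w : V}
    (hbw : (squareGraph H).Adj b w) (hcw : ¬ (squareGraph H).Adj c w)
    (hw : w ∉ insert c (insert b L)) (hℓ : ℓ ∈ L) : ¬ H.Adj ℓ b := by
  intro hℓb
  have hb : H.neighborSet b ⊆ insert c (insert b L) := by
    intro z hbz
    by_cases hzℓ : z = ℓ
    · exact hzℓ ▸ Or.inr (Or.inr hℓ)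
    · exact hL ℓ hℓ (squareGraph_adj_of_adj_of_adj_s6 (Ne.symm hzℓ) hℓb hbz)
  have hw' : ∀ z ∈ insert c (insert b L), z ≠ b → ¬ H.Adj z w := by
    rintro z (rfl | rfl | hz) hzb hzw
    exacts [hcw (squareGraph_adj_of_adj hzw), hzb rfl,
      hw (hL z hz (squareGraph_adj_of_adj hzw))]
  obtain ⟨-, hbw | ⟨z, hbz, hzw⟩⟩ := hbw
  exacts [hw (hb hbw), hw' z (hb hbz) hbz.ne' hzw]

lemma adj_center_of_leaves_closed
    (hL : ∀ ℓ ∈ L, (squareGraph H).neighborSet ℓ ⊆ insert c (insert b L))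
    (hLb : ∀ ℓ ∈ L, ¬ H.Adj ℓ b) (hℓ : ℓ ∈ L) (hℓb : (squareGraph H).Adj ℓ b) :
    H.Adj ℓ c ∧ H.Adj c b := by
  obtain ⟨-, hℓb | ⟨z, hℓz, hzb⟩⟩ := hℓb
  · exact absurd hℓb (hLb ℓ hℓ)
  · rcases hL ℓ hℓ (squareGraph_adj_of_adj hℓz) with rfl | rfl | hz
    exacts [⟨hℓz, hzb⟩, absurd hzb H.irrefl, absurd hzb (hLb z hz)]

lemma center_not_adj_of_leaves_closed
    (hL : ∀ ℓ ∈ L, (squareGraph H).neighborSet ℓ ⊆ insert c (insert b L))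
    (hℓ : ℓ ∈ L) (hℓc : H.Adj ℓ c) {x : V} (hx : x ∉ insert c (insert b L)) : ¬ H.Adj c x :=
  fun hcx => hx <| hL ℓ hℓ <|
    squareGraph_adj_of_adj_of_adj_s6 (fun h => hx (h ▸ Or.inr (Or.inr hℓ))) hℓc hcx

lemma neighborSet_subset_of_leaves_closed
    (hL : ∀ ℓ ∈ L, (squareGraph H).neighborSet ℓ ⊆ insert c (insert b L))
    (hLb : ∀ ℓ ∈ L, ¬ H.Adj ℓ b) (hℓ : ℓ ∈ L) : H.neighborSet ℓ ⊆ insert c L := by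
  intro y hy
  rcases hL ℓ hℓ (squareGraph_adj_of_adj hy) with h | rfl | h
  exacts [Or.inl h, absurd hy (hLb ℓ hℓ), Or.inr h]

end Unbalanced

section Star

variable {H : SimpleGraph V} {c ℓ : V} {L : Set V} {D : Set (Sym2 V)}

/-- A path through a deleted edge inside `L` can be rerouted through the common neighbour `c`. -/
lemma squareGraph_deleteEdges_eq (hcL : c ∉ L) (hLc : ∀ ℓ ∈ L, H.Adj ℓ c)
    (hL : ∀ ℓ ∈ L, H.neighborSet ℓ ⊆ insert c L) (hD : D ⊆ L.sym2) :
    squareGraph (H.deleteEdges D) = squareGraph H := by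
  have hcD : ∀ v, s(v, c) ∉ D := fun v h => hcL (hD h).2
  have hLc' : ∀ ℓ ∈ L, (H.deleteEdges D).Adj ℓ c := fun ℓ hℓ =>
    deleteEdges_adj.mpr ⟨hLc ℓ hℓ, hcD ℓ⟩
  have hreroute : ∀ {a a'}, a ≠ a' → a ∈ L → a' ∈ insert c L →
      (squareGraph (H.deleteEdges D)).Adj a a' := by
    rintro a a' hne ha (rfl | ha')
    exacts [squareGraph_adj_of_adj (hLc' a ha),
      squareGraph_adj_of_adj_of_adj_s6 hne (hLc' a ha) (hLc' a' ha').symm]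
  refine le_antisymm (squareGraph_mono (H.deleteEdges_le D)) ?_
  rintro a a' ⟨hne, hadj | ⟨z, haz, hza'⟩⟩
  · by_cases hm : s(a, a') ∈ D
    · exact hreroute hne (hD hm).1 (Or.inr (hD hm).2)
    · exact squareGraph_adj_of_adj (deleteEdges_adj.mpr ⟨hadj, hm⟩)
  · by_cases hm : s(a, z) ∈ D
    · exact hreroute hne (hD hm).1 (hL z (hD hm).2 hza')
    by_cases hm' : s(z, a') ∈ D
    · exact (hreroute hne.symm (hD hm').2 (hL z (hD hm').1 haz.symm)).symm
    · exact squareGraph_adj_of_adj_of_adj_s6 hne (deleteEdges_adj.mpr ⟨haz, hm⟩)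
        (deleteEdges_adj.mpr ⟨hza', hm'⟩)

lemma eq_of_deleteEdges_adj (hL : ∀ ℓ ∈ L, H.neighborSet ℓ ⊆ insert c L)
    (hD : ∀ a ∈ L, ∀ a' ∈ L, a ≠ a' → s(a, a') ∈ D) (hℓ : ℓ ∈ L) {y : V}
    (hℓy : (H.deleteEdges D).Adj ℓ y) : y = c := by
  obtain ⟨hℓy, hm⟩ := deleteEdges_adj.mp hℓy
  rcases hL ℓ hℓ hℓy with rfl | hy
  exacts [rfl, absurd (hD ℓ hℓ y hy hℓy.ne) hm]

lemma eq_or_eq_of_deleteEdges_adj {b : V} (hL : ∀ ℓ ∈ L, H.neighborSet ℓ ⊆ insert c L)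
    (hLb : ∀ ℓ ∈ L, ¬ H.Adj ℓ b) (hD : ∀ a ∈ L, ∀ a' ∈ L, a ≠ a' → s(a, a') ∈ D) {a a' : V}
    (ha : a ∈ insert c (insert b L)) (ha' : a' ∈ insert c (insert b L))
    (h : (H.deleteEdges D).Adj a a') : a = c ∨ a' = c := by
  rcases ha with rfl | rfl | ha
  · exact Or.inl rfl
  · rcases ha' with rfl | rfl | ha'
    · exact Or.inr rfl
    · exact absurd h (H.deleteEdges D).irrefl
    · exact absurd (deleteEdges_adj.mp h).1.symm (hLb a' ha')
  · exact Or.inr (eq_of_deleteEdges_adj hL hD ha h)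

end Star

theorem minimal_separator_unbalanced_structure_general {r p : ℕ}
    (G H : SimpleGraph V) (hH : IsSquareRoot H G)
    (u : Fin (r + 3) → V) (hu : Function.Injective u)
    (hclique : G.IsClique (Set.range u))
    (hsep : IsMinSep G {u 0, u 1} (u '' {i | 2 ≤ (i : ℕ)}) (Set.range u)ᶜ)
    (x : Fin (p + 1) → V)
    (hxr : Set.range x = G.neighborSet (u 0) \ Set.range u)
    -- N_G[u_2] ∖ N_G[u_1] ≠ ∅:
    (hdiff : (closedNbhd G (u 1) \ closedNbhd G (u 0)).Nonempty) :
    (∀ i : Fin (r + 3), i ≠ 0 → H.Adj (u i) (u 0)) ∧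
    (∀ i : Fin (r + 3), 2 ≤ (i : ℕ) → ¬ H.Adj (u i) (u 1)) ∧
    (∀ j, ¬ H.Adj (u 0) (x j)) ∧
    -- deleting all edges u_iu_j with 3 ≤ i < j ≤ r from H gives a square root H'
    -- of G in which {u_1, ..., u_r} induces a star with central vertex u_1 and
    -- whose leaves u_3, ..., u_r are pendant vertices:
    (IsSquareRoot (H.deleteEdges
        {e | ∃ i j : Fin (r + 3), 2 ≤ (i : ℕ) ∧ 2 ≤ (j : ℕ) ∧ i ≠ j ∧ e = s(u i, u j)}) G ∧
     (∀ i : Fin (r + 3), i ≠ 0 → (H.deleteEdges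
        {e | ∃ i j : Fin (r + 3), 2 ≤ (i : ℕ) ∧ 2 ≤ (j : ℕ) ∧ i ≠ j ∧ e = s(u i, u j)}).Adj (u 0) (u i)) ∧
     (∀ i j : Fin (r + 3), (H.deleteEdges
        {e | ∃ i j : Fin (r + 3), 2 ≤ (i : ℕ) ∧ 2 ≤ (j : ℕ) ∧ i ≠ j ∧ e = s(u i, u j)}).Adj (u i) (u j) → i = 0 ∨ j = 0) ∧
     (∀ i : Fin (r + 3), 2 ≤ (i : ℕ) → IsPendant (H.deleteEdges
        {e | ∃ i j : Fin (r + 3), 2 ≤ (i : ℕ) ∧ 2 ≤ (j : ℕ) ∧ i ≠ j ∧ e = s(u i, u j)}) (u i))) := by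
  subst hH
  set L := u '' {i | 2 ≤ (i : ℕ)}
  set D : Set (Sym2 V) :=
    {e | ∃ i j : Fin (r + 3), 2 ≤ (i : ℕ) ∧ 2 ≤ (j : ℕ) ∧ i ≠ j ∧ e = s(u i, u j)}
  have hrange : Set.range u = insert (u 0) (insert (u 1) L) := range_eq_insert_insert_image u
  have h0L : u 0 ∉ L := fun h => by simpa using hu.mem_set_image.mp h
  have hu2 : u ⟨2, by omega⟩ ∈ L := ⟨_, Nat.le_refl 2, rfl⟩
  have hclosed := hrange ▸ hsep.1.neighborSet_subset_range hu
  obtain ⟨w, hw, h1w, h0w⟩ :=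
    hclique.exists_adj_not_adj_of_closedNbhd_diff ⟨0, rfl⟩ ⟨1, rfl⟩ hdiff
  have hLb : ∀ ℓ ∈ L, ¬ H.Adj ℓ (u 1) := fun ℓ =>
    not_adj_of_leaves_closed hclosed h1w h0w (hrange ▸ hw)
  have hLc : ∀ ℓ ∈ L, H.Adj ℓ (u 0) ∧ H.Adj (u 0) (u 1) := by
    rintro _ ⟨i, hi, rfl⟩
    refine adj_center_of_leaves_closed hclosed hLb ⟨i, hi, rfl⟩ (hclique ⟨i, rfl⟩ ⟨1, rfl⟩ ?_)
    exact hu.ne (by rintro rfl; simp at hi)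
  have hL : ∀ ℓ ∈ L, H.neighborSet ℓ ⊆ insert (u 0) L := fun ℓ =>
    neighborSet_subset_of_leaves_closed hclosed hLb
  have hDL : D ⊆ L.sym2 := setOf_mk_subset_sym2_image
  have hLD : ∀ a ∈ L, ∀ a' ∈ L, a ≠ a' → s(a, a') ∈ D := fun _ ha _ ha' =>
    mk_mem_setOf_of_mem_image ha ha'
  have hadj : ∀ i : Fin (r + 3), i ≠ 0 → H.Adj (u i) (u 0) := by
    intro i hi
    rcases i.eq_zero_or_eq_one_or_two_le with rfl | rfl | hi2
    exacts [absurd rfl hi, (hLc _ hu2).2.symm, (hLc _ ⟨i, hi2, rfl⟩).1]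
  have hadj' : ∀ i : Fin (r + 3), i ≠ 0 → (H.deleteEdges D).Adj (u 0) (u i) := fun i hi =>
    deleteEdges_adj.mpr ⟨(hadj i hi).symm, fun h => h0L (hDL h).1⟩
  refine ⟨hadj, fun i hi => hLb _ ⟨i, hi, rfl⟩, fun j => ?_,
    squareGraph_deleteEdges_eq h0L (fun ℓ hℓ => (hLc ℓ hℓ).1) hL hDL, hadj', fun i j h => ?_,
    fun i hi => ⟨u 0, ?_⟩⟩
  · exact center_not_adj_of_leaves_closed hclosed hu2 (hLc _ hu2).1
      (hrange ▸ (hxr.subset ⟨j, rfl⟩).2)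
  · exact (eq_or_eq_of_deleteEdges_adj hL hLb hLD (hrange ▸ ⟨i, rfl⟩) (hrange ▸ ⟨j, rfl⟩) h).imp
      (@hu _ _) (@hu _ _)
  · refine ⟨(hadj' i ?_).symm, fun y => eq_of_deleteEdges_adj hL hLD ⟨i, hi, rfl⟩⟩
    rintro rfl
    simp at hi

/-- Lemma 2 iii). Here the paper's `u_1, ..., u_r` (`r ≥ 3`) is `u : Fin (r+3) → V`
and `x_1, ..., x_p` (`p ≥ 1`) is `x : Fin (p+1) → V`. -/
theorem minimal_separator_unbalanced_structure {r p : ℕ}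
    (G H : SimpleGraph V) (hG : G.Connected) (hH : IsSquareRoot H G)
    (u : Fin (r + 3) → V) (hu : Function.Injective u)
    (hclique : G.IsClique (Set.range u))
    (hsep : IsMinSep G {u 0, u 1} (u '' {i | 2 ≤ (i : ℕ)}) (Set.range u)ᶜ)
    (x : Fin (p + 1) → V) (hx : Function.Injective x)
    (hxr : Set.range x = G.neighborSet (u 0) \ Set.range u)
    -- N_G[u_2] ∖ N_G[u_1] ≠ ∅:
    (hdiff : (closedNbhd G (u 1) \ closedNbhd G (u 0)).Nonempty) :
    (∀ i : Fin (r + 3), i ≠ 0 → H.Adj (u i) (u 0)) ∧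
    (∀ i : Fin (r + 3), 2 ≤ (i : ℕ) → ¬ H.Adj (u i) (u 1)) ∧
    (∀ j, ¬ H.Adj (u 0) (x j)) ∧
    -- deleting all edges u_iu_j with 3 ≤ i < j ≤ r from H gives a square root H'
    -- of G in which {u_1, ..., u_r} induces a star with central vertex u_1 and
    -- whose leaves u_3, ..., u_r are pendant vertices:
    (IsSquareRoot (H.deleteEdges
        {e | ∃ i j : Fin (r + 3), 2 ≤ (i : ℕ) ∧ 2 ≤ (j : ℕ) ∧ i ≠ j ∧ e = s(u i, u j)}) G ∧
     (∀ i : Fin (r + 3), i ≠ 0 → (H.deleteEdges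
        {e | ∃ i j : Fin (r + 3), 2 ≤ (i : ℕ) ∧ 2 ≤ (j : ℕ) ∧ i ≠ j ∧ e = s(u i, u j)}).Adj (u 0) (u i)) ∧
     (∀ i j : Fin (r + 3), (H.deleteEdges
        {e | ∃ i j : Fin (r + 3), 2 ≤ (i : ℕ) ∧ 2 ≤ (j : ℕ) ∧ i ≠ j ∧ e = s(u i, u j)}).Adj (u i) (u j) → i = 0 ∨ j = 0) ∧
     (∀ i : Fin (r + 3), 2 ≤ (i : ℕ) → IsPendant (H.deleteEdges
        {e | ∃ i j : Fin (r + 3), 2 ≤ (i : ℕ) ∧ 2 ≤ (j : ℕ) ∧ i ≠ j ∧ e = s(u i, u j)}) (u i))) :=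
  minimal_separator_unbalanced_structure_general G H hH u hu hclique hsep x hxr hdiff
end

section
/- Let G be a connected F-graph, i.e., G contains p + q + r distinct vertices u_1, ..., u_r, x_1, ..., x_p, y_1, ..., y_q (with r ≥ 3, p ≥ 1, q ≥ 1) such that: (i) {u_1, ..., u_r} is a clique in G; (ii) if r ≥ 4 then {u_1, u_2, u_3} is a minimal ({u_4, ..., u_r}, V_G ∖ {u_1, ..., u_r})-separator of G; (iii) N_G(u_2) = {u_1, u_3, ..., u_r} ∪ {x_1, ..., x_p} ∪ {y_1, ..., y_q}; (iv) N_G(u_1) ∩ N_G(u_3) = {u_2, u_4, ..., u_r}; (v) {x_1, ..., x_p} ⊆ N_G(u_1) and {y_1, ..., y_q} ⊆ N_G(u_3); (vi) x_iy_j ∉ E_G for all i, j. If H is a square root of G, then the edges u_1u_2, u_2u_3, u_2u_4, ..., u_2u_r, u_1x_1, ..., u_1x_p, u_3y_1, ..., u_3y_q all belong to H, d_H(u_2) = r − 1, N_H(u_1) ∖ {u_2} = {x_1, ..., x_p}, and N_H(u_3) ∖ {u_2} = {y_1, ..., y_q}. -/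
open SimpleGraph

variable {V : Type*}

/-- `G` is an F-graph with F-triple `u 0, u 1, u 2`, remaining clique vertices
`u i` for `3 ≤ i`, and attachment vertices `x j` (neighbors of `u 0`) and
`y j` (neighbors of `u 2`). Here the paper's `u_1,...,u_r` is `u : Fin (r+3) → V`
(so `r ≥ 3`), `x_1,...,x_p` is `x : Fin (p+1) → V` (so `p ≥ 1`) and
`y_1,...,y_q` is `y : Fin (q+1) → V` (so `q ≥ 1`). -/
def IsFGraph {r p q : ℕ} (G : SimpleGraph V) (u : Fin (r + 3) → V)
    (x : Fin (p + 1) → V) (y : Fin (q + 1) → V) : Prop :=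
  -- (i) {u_1, ..., u_r} is a clique in G
  G.IsClique (Set.range u) ∧
  -- (ii) if r ≥ 4 then {u_1,u_2,u_3} is a minimal ({u_4,...,u_r}, V ∖ {u_1,...,u_r})-separator
  (4 ≤ r + 3 → IsMinSep G {u 0, u 1, u 2} (u '' {i | 3 ≤ (i : ℕ)}) (Set.range u)ᶜ) ∧
  -- (iii) N_G(u_2) = {u_1, u_3, ..., u_r} ∪ {x_1,...,x_p} ∪ {y_1,...,y_q}
  G.neighborSet (u 1) = (u '' {i | i ≠ 1}) ∪ Set.range x ∪ Set.range y ∧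
  -- (iv) N_G(u_1) ∩ N_G(u_3) = {u_2, u_4, ..., u_r}
  G.neighborSet (u 0) ∩ G.neighborSet (u 2) = u '' {i | i = 1 ∨ 3 ≤ (i : ℕ)} ∧
  -- (v)
  Set.range x ⊆ G.neighborSet (u 0) ∧
  Set.range y ⊆ G.neighborSet (u 2) ∧
  -- (vi)
  ∀ j k, ¬ G.Adj (x j) (y k)

/-! In `H² = G` every `G`-edge is an `H`-edge or an `H`-path of length two. The separator
condition confines the `G`-neighbourhood of `u_i`, `i ≥ 4`, to the clique, and `X`, `Y` are
`G`-neighbours of `u_2` with no `G`-edge between them, so `u_2` has no `H`-neighbour in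
`X ∪ Y`: its `H`-paths to `X` must pass through `u_1`, those to `Y` through `u_3`. The edges
`u_1 x` and `u_3 y` then forbid every other `H`-edge from `u_1` or `u_3` into the clique,
which determines the three neighbourhoods. -/

namespace IsSquareRoot

variable {G H : SimpleGraph V} {v w z : V}

theorem adj_iff (hH : IsSquareRoot H G) :
    G.Adj v w ↔ v ≠ w ∧ (H.Adj v w ∨ ∃ z, H.Adj v z ∧ H.Adj z w) := by
  subst hH; rfl

theorem adj_of_adj (hH : IsSquareRoot H G) (h : H.Adj v w) : G.Adj v w :=
  hH.adj_iff.2 ⟨h.ne, Or.inl h⟩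

theorem adj_of_adj_of_adj (hH : IsSquareRoot H G) (hv : H.Adj z v) (hw : H.Adj z w)
    (hne : v ≠ w) : G.Adj v w :=
  hH.adj_iff.2 ⟨hne, Or.inr ⟨z, hv.symm, hw⟩⟩

theorem adj_or_exists_adj_adj (hH : IsSquareRoot H G) (h : G.Adj v w) :
    H.Adj v w ∨ ∃ z, H.Adj v z ∧ H.Adj z w :=
  (hH.adj_iff.1 h).2

end IsSquareRoot

/-- A set-level form of an F-graph: `U` is the clique `{u_1, …, u_r}`, `a b c` are
`u_1 u_2 u_3`, and `X`, `Y` are the attachment sets of `a` and `c`. -/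
structure IsFTriple (G : SimpleGraph V) (U X Y : Set V) (a b c : V) : Prop where
  left_mem : a ∈ U
  center_mem : b ∈ U
  right_mem : c ∈ U
  isClique : G.IsClique U
  disjoint_left : Disjoint U X
  disjoint_right : Disjoint U Y
  left_nonempty : X.Nonempty
  right_nonempty : Y.Nonempty
  neighborSet_inner_subset : ∀ w ∈ U, w ≠ a → w ≠ b → w ≠ c → G.neighborSet w ⊆ U
  neighborSet_center_subset : G.neighborSet b ⊆ U ∪ X ∪ Y
  left_subset : X ⊆ G.neighborSet a ∩ G.neighborSet b
  right_subset : Y ⊆ G.neighborSet c ∩ G.neighborSet b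
  not_adj_right_left : ∀ x ∈ X, ¬ G.Adj c x
  not_adj_left_right : ∀ y ∈ Y, ¬ G.Adj a y
  not_adj_of_mem_left_of_mem_right : ∀ x ∈ X, ∀ y ∈ Y, ¬ G.Adj x y

namespace IsFTriple

variable {G H : SimpleGraph V} {U X Y : Set V} {a b c v x y : V}

theorem symm (hF : IsFTriple G U X Y a b c) : IsFTriple G U Y X c b a where
  left_mem := hF.right_mem
  center_mem := hF.center_mem
  right_mem := hF.left_mem
  isClique := hF.isClique
  disjoint_left := hF.disjoint_right
  disjoint_right := hF.disjoint_left
  left_nonempty := hF.right_nonempty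
  right_nonempty := hF.left_nonempty
  neighborSet_inner_subset w hw hc hb ha := hF.neighborSet_inner_subset w hw ha hb hc
  neighborSet_center_subset := Set.union_right_comm U X Y ▸ hF.neighborSet_center_subset
  left_subset := hF.right_subset
  right_subset := hF.left_subset
  not_adj_right_left := hF.not_adj_left_right
  not_adj_left_right := hF.not_adj_right_left
  not_adj_of_mem_left_of_mem_right y hy x hx h :=
    hF.not_adj_of_mem_left_of_mem_right x hx y hy h.symm

theorem not_mem_of_mem_left (hF : IsFTriple G U X Y a b c) (hx : x ∈ X) : x ∉ U :=
  fun hxU => Set.disjoint_left.1 hF.disjoint_left hxU hx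

theorem ne_of_mem_left_of_mem_right (hF : IsFTriple G U X Y a b c) (hx : x ∈ X) (hy : y ∈ Y) :
    x ≠ y := by
  rintro rfl
  exact hF.not_adj_left_right x hy (hF.left_subset hx).1

theorem not_adj_inner_left (hF : IsFTriple G U X Y a b c) (hv : v ∈ U) (hva : v ≠ a)
    (hvb : v ≠ b) (hvc : v ≠ c) (hx : x ∈ X) : ¬ G.Adj v x :=
  fun h => hF.not_mem_of_mem_left hx (hF.neighborSet_inner_subset v hv hva hvb hvc h)

theorem mem_of_adj_center (hF : IsFTriple G U X Y a b c) (h : G.Adj b v) :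
    v ∈ U ∨ v ∈ X ∨ v ∈ Y := by
  rcases hF.neighborSet_center_subset h with (hU | hX) | hY
  exacts [Or.inl hU, Or.inr (Or.inl hX), Or.inr (Or.inr hY)]

variable (hH : IsSquareRoot H G)
include hH

/-- With `b y ∈ E_H`, every candidate for the middle vertex of an `H`-path from `b` to some
`x ∈ X` creates a forbidden `G`-edge at `x` or at `y`. -/
theorem not_adj_center_right (hF : IsFTriple G U X Y a b c) (hy : y ∈ Y) : ¬ H.Adj b y := by
  intro hby
  obtain ⟨x, hx⟩ := hF.left_nonempty
  have hxy := hF.not_adj_of_mem_left_of_mem_right x hx y hy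
  rcases hH.adj_or_exists_adj_adj (hF.left_subset hx).2 with hbx | ⟨w, hbw, hwx⟩
  · exact hxy (hH.adj_of_adj_of_adj hbx hby (hF.ne_of_mem_left_of_mem_right hx hy))
  rcases hF.mem_of_adj_center (hH.adj_of_adj hbw) with hwU | hwX | hwY
  · by_cases hwa : w = a
    · subst hwa
      exact hF.not_adj_left_right y hy (hH.adj_of_adj_of_adj hbw hby
        fun h => hF.symm.not_mem_of_mem_left hy (h ▸ hwU))
    by_cases hwc : w = c
    · exact hF.not_adj_right_left x hx (hwc ▸ hH.adj_of_adj hwx)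
    exact hF.not_adj_inner_left hwU hwa hbw.ne.symm hwc hx (hH.adj_of_adj hwx)
  · exact hF.not_adj_of_mem_left_of_mem_right w hwX y hy
      (hH.adj_of_adj_of_adj hbw hby (hF.ne_of_mem_left_of_mem_right hwX hy))
  · exact hF.not_adj_of_mem_left_of_mem_right x hx w hwY (hH.adj_of_adj hwx).symm

theorem adj_center_left_and_adj_left (hF : IsFTriple G U X Y a b c) (hx : x ∈ X) :
    H.Adj b a ∧ H.Adj a x := by
  rcases hH.adj_or_exists_adj_adj (hF.left_subset hx).2 with hbx | ⟨w, hbw, hwx⟩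
  · exact absurd hbx (hF.symm.not_adj_center_right hH hx)
  rcases hF.mem_of_adj_center (hH.adj_of_adj hbw) with hwU | hwX | hwY
  · by_cases hwa : w = a
    · subst hwa
      exact ⟨hbw, hwx⟩
    by_cases hwc : w = c
    · exact absurd (hwc ▸ hH.adj_of_adj hwx) (hF.not_adj_right_left x hx)
    exact absurd (hH.adj_of_adj hwx) (hF.not_adj_inner_left hwU hwa hbw.ne.symm hwc hx)
  · exact absurd hbw (hF.symm.not_adj_center_right hH hwX)
  · exact absurd hbw (hF.not_adj_center_right hH hwY)

theorem adj_center_left (hF : IsFTriple G U X Y a b c) : H.Adj b a :=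
  (hF.adj_center_left_and_adj_left hH hF.left_nonempty.some_mem).1

theorem adj_left (hF : IsFTriple G U X Y a b c) (hx : x ∈ X) : H.Adj a x :=
  (hF.adj_center_left_and_adj_left hH hx).2

/-- Another clique neighbour `v` of `a` in `H` would be `G`-adjacent to every `x ∈ X`. -/
theorem eq_center_of_adj_left (hF : IsFTriple G U X Y a b c) (hv : v ∈ U) (hav : H.Adj a v) :
    v = b := by
  obtain ⟨x, hx⟩ := hF.left_nonempty
  have hvx : G.Adj v x := hH.adj_of_adj_of_adj hav (hF.adj_left hH hx)
    fun h => hF.not_mem_of_mem_left hx (h ▸ hv)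
  by_contra hvb
  by_cases hvc : v = c
  · exact hF.not_adj_right_left x hx (hvc ▸ hvx)
  exact hF.not_adj_inner_left hv hav.ne.symm hvb hvc hx hvx

/-- The middle vertex of the `H`-path from `a` to `v` lies in `N_G(v) ⊆ U`, so it is `b`. -/
theorem adj_center_of_mem_inner (hF : IsFTriple G U X Y a b c) (hv : v ∈ U) (hva : v ≠ a)
    (hvb : v ≠ b) (hvc : v ≠ c) : H.Adj b v := by
  rcases hH.adj_or_exists_adj_adj (hF.isClique hF.left_mem hv (Ne.symm hva))
    with hav | ⟨w, haw, hwv⟩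
  · exact absurd (hF.eq_center_of_adj_left hH hv hav) hvb
  have hwU : w ∈ U := hF.neighborSet_inner_subset v hv hva hvb hvc (hH.adj_of_adj hwv.symm)
  exact hF.eq_center_of_adj_left hH hwU haw ▸ hwv

theorem neighborSet_center (hF : IsFTriple G U X Y a b c) : H.neighborSet b = U \ {b} := by
  ext v
  refine ⟨fun hbv => ⟨?_, hbv.ne.symm⟩, fun ⟨hv, hvb⟩ => ?_⟩
  · rcases hF.mem_of_adj_center (hH.adj_of_adj hbv) with hvU | hvX | hvY
    · exact hvU
    · exact absurd hbv (hF.symm.not_adj_center_right hH hvX)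
    · exact absurd hbv (hF.not_adj_center_right hH hvY)
  by_cases hva : v = a
  · exact hva ▸ hF.adj_center_left hH
  by_cases hvc : v = c
  · exact hvc ▸ hF.symm.adj_center_left hH
  exact hF.adj_center_of_mem_inner hH hv hva hvb hvc

theorem neighborSet_left_diff_center (hF : IsFTriple G U X Y a b c) :
    H.neighborSet a \ {b} = X := by
  ext v
  refine ⟨fun ⟨hav, hvb⟩ => ?_, fun hx => ⟨hF.adj_left hH hx, ?_⟩⟩
  · have hbv : G.Adj b v := hH.adj_of_adj_of_adj (hF.adj_center_left hH).symm hav (Ne.symm hvb)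
    rcases hF.mem_of_adj_center hbv with hvU | hvX | hvY
    · exact absurd (hF.eq_center_of_adj_left hH hvU hav) hvb
    · exact hvX
    · exact absurd (hH.adj_of_adj hav) (hF.not_adj_left_right v hvY)
  · exact fun hxb => hF.not_mem_of_mem_left hx (hxb ▸ hF.center_mem)

end IsFTriple

theorem Fin.three_le_of_ne {n : ℕ} {i : Fin (n + 3)} (h0 : i ≠ 0) (h1 : i ≠ 1) (h2 : i ≠ 2) :
    3 ≤ (i : ℕ) := by
  obtain ⟨_ | _ | _ | k, hk⟩ := i
  · exact absurd (Fin.ext rfl) h0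
  · exact absurd (Fin.ext (by simp)) h1
  · exact absurd (Fin.ext (by simp [Nat.mod_eq_of_lt, hk])) h2
  · exact Nat.le_add_left 3 k

section IsFGraph

variable {r p q : ℕ} {G : SimpleGraph V} {u : Fin (r + 3) → V} {x : Fin (p + 1) → V}
  {y : Fin (q + 1) → V}

theorem IsFGraph.neighborSet_subset_range (hu : Function.Injective u) (hF : IsFGraph G u x y)
    {i : Fin (r + 3)} (hi : 3 ≤ (i : ℕ)) : G.neighborSet (u i) ⊆ Set.range u := by
  obtain ⟨-, hsep, -⟩ := hF
  intro v (hv : G.Adj (u i) v)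
  by_contra hvU
  obtain ⟨s, hs, hsS⟩ := (hsep (by omega)).1 (u i) ⟨i, hi, rfl⟩ v hvU (Walk.cons hv Walk.nil)
  rcases (by simpa using hs : s = u i ∨ s = v) with rfl | rfl
  · rcases hsS with h | h | h <;> rw [hu h] at hi
    · simp at hi
    · simp at hi
    · have := Nat.mod_le 2 (r + 3)
      simp at hi
      omega
  · rcases hsS with h | h | h <;> exact hvU ⟨_, h.symm⟩

theorem IsFGraph.isFTriple (hu : Function.Injective u) (hux : ∀ i j, u i ≠ x j)
    (huy : ∀ i j, u i ≠ y j) (hF : IsFGraph G u x y) :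
    IsFTriple G (Set.range u) (Set.range x) (Set.range y) (u 0) (u 1) (u 2) := by
  have hinner : ∀ w ∈ Set.range u, w ≠ u 0 → w ≠ u 1 → w ≠ u 2 →
      G.neighborSet w ⊆ Set.range u := by
    rintro _ ⟨i, rfl⟩ hi0 hi1 hi2
    exact hF.neighborSet_subset_range hu (Fin.three_le_of_ne (mt (congrArg u) hi0)
      (mt (congrArg u) hi1) (mt (congrArg u) hi2))
  obtain ⟨hclique, -, hcenter, hcommon, hleft, hright, hxy⟩ := hF
  have disjoint_left : Disjoint (Set.range u) (Set.range x) := by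
    rw [Set.disjoint_range_iff]; exact hux
  have disjoint_right : Disjoint (Set.range u) (Set.range y) := by
    rw [Set.disjoint_range_iff]; exact huy
  have not_adj_common {v : V} (hv : v ∉ Set.range u) : ¬ (G.Adj (u 0) v ∧ G.Adj (u 2) v) :=
    fun h => hv <| Set.image_subset_range _ _ <|
      hcommon ▸ show v ∈ G.neighborSet (u 0) ∩ G.neighborSet (u 2) from h
  refine ⟨⟨0, rfl⟩, ⟨1, rfl⟩, ⟨2, rfl⟩, hclique, disjoint_left, disjoint_right,
    Set.range_nonempty x, Set.range_nonempty y, hinner, ?_, ?_, ?_, ?_, ?_, ?_⟩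
  · rw [hcenter]
    exact Set.union_subset_union_left _ (Set.union_subset_union_left _ (Set.image_subset_range _ _))
  · rintro _ ⟨j, rfl⟩
    exact ⟨hleft ⟨j, rfl⟩, hcenter ▸ Or.inl (Or.inr ⟨j, rfl⟩)⟩
  · rintro _ ⟨j, rfl⟩
    exact ⟨hright ⟨j, rfl⟩, hcenter ▸ Or.inr ⟨j, rfl⟩⟩
  · rintro _ ⟨j, rfl⟩ h
    exact not_adj_common (Set.disjoint_right.1 disjoint_left ⟨j, rfl⟩) ⟨hleft ⟨j, rfl⟩, h⟩
  · rintro _ ⟨j, rfl⟩ h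
    exact not_adj_common (Set.disjoint_right.1 disjoint_right ⟨j, rfl⟩) ⟨h, hright ⟨j, rfl⟩⟩
  · rintro _ ⟨j, rfl⟩ _ ⟨k, rfl⟩
    exact hxy j k

end IsFGraph

theorem root_of_FGraph_structure_general {r p q : ℕ}
    (G H : SimpleGraph V)
    (u : Fin (r + 3) → V) (x : Fin (p + 1) → V) (y : Fin (q + 1) → V)
    (hu : Function.Injective u)
    (hux : ∀ i j, u i ≠ x j) (huy : ∀ i j, u i ≠ y j)
    (hF : IsFGraph G u x y)
    (hH : IsSquareRoot H G) :
    H.Adj (u 0) (u 1) ∧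
    (∀ i : Fin (r + 3), 2 ≤ (i : ℕ) → H.Adj (u 1) (u i)) ∧
    (∀ j, H.Adj (u 0) (x j)) ∧
    (∀ j, H.Adj (u 2) (y j)) ∧
    (H.neighborSet (u 1)).ncard = r + 2 ∧
    H.neighborSet (u 0) \ {u 1} = Set.range x ∧
    H.neighborSet (u 2) \ {u 1} = Set.range y := by
  have hT := hF.isFTriple hu hux huy
  have hN := hT.neighborSet_center hH
  refine ⟨(hT.adj_center_left hH).symm, fun i hi => ?_, fun j => hT.adj_left hH ⟨j, rfl⟩,
    fun j => hT.symm.adj_left hH ⟨j, rfl⟩, ?_, hT.neighborSet_left_diff_center hH,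
    hT.symm.neighborSet_left_diff_center hH⟩
  · have hi1 : i ≠ 1 := fun h => by simp [h] at hi
    exact show u i ∈ H.neighborSet (u 1) from hN ▸ ⟨Set.mem_range_self i, hu.ne hi1⟩
  · rw [hN, Set.ncard_sdiff_singleton_of_mem (Set.mem_range_self 1),
      Set.ncard_range_of_injective hu, Nat.card_eq_fintype_card, Fintype.card_fin]
    omega

/-- Lemma 4, first part. Here the paper's `u_1, ..., u_r` (`r ≥ 3`) is
`u : Fin (r+3) → V`, `x_1, ..., x_p` (`p ≥ 1`) is `x : Fin (p+1) → V`, and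
`y_1, ..., y_q` (`q ≥ 1`) is `y : Fin (q+1) → V`; all these vertices are distinct. -/
theorem root_of_FGraph_structure {r p q : ℕ}
    (G H : SimpleGraph V) (hG : G.Connected)
    (u : Fin (r + 3) → V) (x : Fin (p + 1) → V) (y : Fin (q + 1) → V)
    (hu : Function.Injective u) (hx : Function.Injective x) (hy : Function.Injective y)
    (hux : ∀ i j, u i ≠ x j) (huy : ∀ i j, u i ≠ y j) (hxy : ∀ i j, x i ≠ y j)
    (hF : IsFGraph G u x y)
    (hH : IsSquareRoot H G) :
    H.Adj (u 0) (u 1) ∧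
    (∀ i : Fin (r + 3), 2 ≤ (i : ℕ) → H.Adj (u 1) (u i)) ∧
    (∀ j, H.Adj (u 0) (x j)) ∧
    (∀ j, H.Adj (u 2) (y j)) ∧
    (H.neighborSet (u 1)).ncard = r + 2 ∧
    H.neighborSet (u 0) \ {u 1} = Set.range x ∧
    H.neighborSet (u 2) \ {u 1} = Set.range y :=
  root_of_FGraph_structure_general G H u x y hu hux huy hF hH
end

section
/- Let u and v be true twins in a connected graph G with at least three vertices, and let G' be the graph obtained from G by deleting v. If H' is a square root of G', then the graph H obtained from H' by adding v with N_H(v) = N_{H'}(u) (that is, by adding v as a false twin of u) is a square root of G. -/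
open SimpleGraph

variable {V : Type*}

/-!
Squaring commutes with deleting `v` from `H`, because `v` is a false twin of `u` and any path
through `v` can be rerouted through `u`; so `H²` and `G` agree off `v`. In both graphs `u` and
`v` have the same neighbours outside `{u, v}` (false twins in `H` stay twins in `H²`), and `u, v`
are adjacent in both: in `G` as true twins, in `H²` through any `H`-neighbour of `u`, which exists
because `u` has a `G`-neighbour other than `v` by connectivity and `|V| ≥ 3`.
-/

theorem TrueTwins.adj {G : SimpleGraph V} {u v : V} (htw : TrueTwins G u v) (huv : u ≠ v) :
    G.Adj u v := by
  have hv : v ∈ closedNbhd G u := htw ▸ Set.mem_insert v _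
  exact hv.resolve_left huv.symm

theorem TrueTwins.adj_iff_s10 {G : SimpleGraph V} {u v w : V} (htw : TrueTwins G u v)
    (hwu : w ≠ u) (hwv : w ≠ v) : G.Adj v w ↔ G.Adj u w := by
  have h : w ∈ closedNbhd G v ↔ w ∈ closedNbhd G u := by rw [htw]
  simpa [closedNbhd, hwu, hwv] using h

theorem TrueTwins.exists_adj_ne {G : SimpleGraph V} {u v c : V} (htw : TrueTwins G u v)
    (hG : G.Connected) (hcu : c ≠ u) (hcv : c ≠ v) : ∃ w, w ≠ v ∧ G.Adj u w := by
  obtain ⟨d, -, hd, hd'⟩ := (hG.preconnected u c).some.exists_boundary_dart {u, v}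
    (Set.mem_insert u _) (by simp [hcu, hcv])
  simp only [Set.mem_insert_iff, Set.mem_singleton_iff, not_or] at hd hd'
  rcases hd with hd | hd
  · exact ⟨d.snd, hd'.2, hd ▸ d.adj⟩
  · exact ⟨d.snd, hd'.2, (htw.adj_iff_s10 hd'.1 hd'.2).mp (hd ▸ d.adj)⟩

theorem exists_ne_ne_of_three_distinct {a b c : V} (hab : a ≠ b) (hac : a ≠ c) (hbc : b ≠ c)
    (x y : V) : ∃ w, w ≠ x ∧ w ≠ y := by
  by_contra! h
  by_cases hax : a = x
  · exact hbc ((h b (hax ▸ hab.symm)).trans (h c (hax ▸ hac.symm)).symm)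
  by_cases hbx : b = x
  · exact hac ((h a hax).trans (h c (hbx ▸ hbc.symm)).symm)
  exact hab ((h a hax).trans (h b hbx).symm)

section FalseTwins

variable {H : SimpleGraph V} {u v : V}

theorem squareGraph_adj_iff_of_falseTwins (hv : ∀ w, H.Adj v w ↔ H.Adj u w) {w : V}
    (hwu : w ≠ u) (hwv : w ≠ v) :
    (squareGraph H).Adj v w ↔ (squareGraph H).Adj u w := by
  simp only [squareGraph, hv, hwu.symm, hwv.symm, ne_eq, not_false_eq_true, true_and]

theorem squareGraph_adj_of_falseTwins (huv : u ≠ v) (hv : ∀ w, H.Adj v w ↔ H.Adj u w)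
    {x : V} (hux : H.Adj u x) : (squareGraph H).Adj u v :=
  ⟨huv, Or.inr ⟨x, hux, ((hv x).mpr hux).symm⟩⟩

theorem induce_squareGraph_of_falseTwins (huv : u ≠ v) (hv : ∀ w, H.Adj v w ↔ H.Adj u w) :
    (squareGraph H).induce {w | w ≠ v} = squareGraph (H.induce {w | w ≠ v}) := by
  ext ⟨a, ha⟩ ⟨b, hb⟩
  simp only [squareGraph, comap_adj, Function.Embedding.subtype_apply, ne_eq, Subtype.mk.injEq,
    Subtype.exists, Set.mem_ofPred_eq]
  refine and_congr_right fun _ => or_congr_right ⟨?_, fun ⟨x, _, hax, hxb⟩ => ⟨x, hax, hxb⟩⟩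
  rintro ⟨x, hax, hxb⟩
  by_cases hxv : x = v
  · subst hxv
    exact ⟨u, huv, ((hv a).mp hax.symm).symm, (hv b).mp hxb⟩
  · exact ⟨x, hxv, hax, hxb⟩

end FalseTwins

theorem adj_iff_of_induce_eq {G₁ G₂ : SimpleGraph V} {s : Set V} (h : G₁.induce s = G₂.induce s)
    {a b : V} (ha : a ∈ s) (hb : b ∈ s) : G₁.Adj a b ↔ G₂.Adj a b :=
  congrArg (fun K : SimpleGraph s => K.Adj ⟨a, ha⟩ ⟨b, hb⟩) h ▸ Iff.rfl

theorem eq_of_induce_eq_of_twins {G₁ G₂ : SimpleGraph V} {u v : V} (huv : u ≠ v)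
    (h : G₁.induce {w | w ≠ v} = G₂.induce {w | w ≠ v})
    (h₁ : ∀ w, w ≠ u → w ≠ v → (G₁.Adj v w ↔ G₁.Adj u w))
    (h₂ : ∀ w, w ≠ u → w ≠ v → (G₂.Adj v w ↔ G₂.Adj u w))
    (hadj : G₁.Adj u v ↔ G₂.Adj u v) : G₁ = G₂ := by
  have hoff : ∀ a b, a ≠ v → b ≠ v → (G₁.Adj a b ↔ G₂.Adj a b) := fun _ _ ha hb =>
    adj_iff_of_induce_eq h ha hb
  have hrow : ∀ w, G₁.Adj v w ↔ G₂.Adj v w := by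
    intro w
    by_cases hwv : w = v
    · simp [hwv]
    by_cases hwu : w = u
    · rw [hwu, G₁.adj_comm, G₂.adj_comm, hadj]
    rw [h₁ w hwu hwv, h₂ w hwu hwv, hoff u w huv hwv]
  ext a b
  by_cases ha : a = v
  · exact ha ▸ hrow b
  by_cases hb : b = v
  · rw [hb, G₁.adj_comm, G₂.adj_comm]; exact hrow a
  exact hoff a b ha hb

/-- Lemma 5 i): if `u, v` are true twins in a connected graph `G` with at least
three vertices, `G'` is obtained from `G` by deleting `v`, `H'` is a square root
of `G'`, and `H` is obtained from `H'` by adding `v` as a false twin of `u`,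
then `H` is a square root of `G`. -/
theorem true_twin_add_false_twin_root (G : SimpleGraph V) (u v : V) (huv : u ≠ v)
    (hG : G.Connected)
    (h3 : ∃ a b c : V, a ≠ b ∧ a ≠ c ∧ b ≠ c)
    (htw : TrueTwins G u v)
    (H' : SimpleGraph {w : V // w ≠ v})
    (hroot : IsSquareRoot H' (G.induce {w : V | w ≠ v}))
    (H : SimpleGraph V)
    (hH₁ : ∀ a b : {w : V // w ≠ v}, H.Adj a b ↔ H'.Adj a b)
    (hH₂ : ∀ a : {w : V // w ≠ v}, H.Adj v a ↔ H'.Adj ⟨u, huv⟩ a) :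
    IsSquareRoot H G := by
  have hfalse : ∀ w, H.Adj v w ↔ H.Adj u w := by
    intro w
    by_cases hwv : w = v
    · subst hwv
      simpa [H.adj_comm u w] using (hH₂ ⟨u, huv⟩).not.mpr (H'.loopless.irrefl _)
    · exact (hH₂ ⟨w, hwv⟩).trans (hH₁ ⟨u, huv⟩ ⟨w, hwv⟩).symm
  have hind : H.induce {w | w ≠ v} = H' := by
    ext a b
    exact hH₁ a b
  have hoff : (squareGraph H).induce {w | w ≠ v} = G.induce {w | w ≠ v} := by
    rw [induce_squareGraph_of_falseTwins huv hfalse, hind]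
    exact hroot
  obtain ⟨a, b, c, hab, hac, hbc⟩ := h3
  obtain ⟨x, hxu, hxv⟩ := exists_ne_ne_of_three_distinct hab hac hbc u v
  obtain ⟨w, hwv, huw⟩ := htw.exists_adj_ne hG hxu hxv
  obtain ⟨y, huy⟩ : ∃ y, H.Adj u y := by
    rcases ((adj_iff_of_induce_eq hoff huv hwv).mpr huw).2 with h | ⟨y, h, -⟩
    exacts [⟨w, h⟩, ⟨y, h⟩]
  exact eq_of_induce_eq_of_twins huv hoff
    (fun w hwu hwv => squareGraph_adj_iff_of_falseTwins hfalse hwu hwv)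
    (fun w hwu hwv => htw.adj_iff_s10 hwu hwv)
    (iff_of_true (squareGraph_adj_of_falseTwins huv hfalse huy) (htw.adj huv))
end

section
/- Let H be a spanning subgraph of a graph G (same vertex set, E_H ⊆ E_G). Then H is a square root of G if and only if E_H is an independent set of the auxiliary graph P(G) and every two vertices that are adjacent in G are at distance at most 2 in H. -/
open SimpleGraph

variable {V : Type*}

/-- The auxiliary graph `P(G)`: its vertices are the edges of `G`, and two
vertices `e₁`, `e₂` are adjacent iff `e₁ = xy` and `e₂ = yz` for three distinct
vertices `x, y, z` with `xz ∉ E_G`. -/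
def auxGraph (G : SimpleGraph V) : SimpleGraph G.edgeSet where
  Adj e₁ e₂ := ∃ a b c : V, a ≠ b ∧ b ≠ c ∧ a ≠ c ∧
    (e₁ : Sym2 V) = s(a, b) ∧ (e₂ : Sym2 V) = s(b, c) ∧ ¬ G.Adj a c
  symm := by
    constructor
    rintro e₁ e₂ ⟨a, b, c, hab, hbc, hac, h1, h2, hnadj⟩
    refine ⟨c, b, a, hbc.symm, hab.symm, hac.symm, ?_, ?_, fun h => hnadj h.symm⟩
    · rw [h2]; exact Sym2.eq_swap
    · rw [h1]; exact Sym2.eq_swap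
  loopless := by
    constructor
    rintro e ⟨a, b, c, hab, hbc, hac, h1, h2, -⟩
    rw [h1, Sym2.eq_iff] at h2
    rcases h2 with ⟨h, -⟩ | ⟨h, -⟩
    · exact hab h
    · exact hac h

/-- A set of vertices is independent if its elements are pairwise non-adjacent. -/
def IsIndepSetIn {W : Type*} (G : SimpleGraph W) (s : Set W) : Prop :=
  s.Pairwise fun a b => ¬ G.Adj a b

section

variable {G H : SimpleGraph V}

theorem squareGraph_le_iff :
    squareGraph H ≤ G ↔ H ≤ G ∧ ∀ ⦃a w b⦄, a ≠ b → H.Adj a w → H.Adj w b → G.Adj a b := by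
  refine ⟨fun h => ⟨fun a b hab => h ⟨hab.ne, .inl hab⟩,
    fun a w b hab haw hwb => h ⟨hab, .inr ⟨w, haw, hwb⟩⟩⟩, ?_⟩
  rintro ⟨hsub, hclosed⟩ a b ⟨hab, hadj | ⟨w, haw, hwb⟩⟩
  · exact hsub hadj
  · exact hclosed hab haw hwb

theorem le_squareGraph_iff :
    G ≤ squareGraph H ↔ ∀ a b, G.Adj a b → (H.Adj a b ∨ ∃ w, H.Adj a w ∧ H.Adj w b) :=
  ⟨fun h _ _ hab => (h hab).2, fun h a b hab => ⟨hab.ne, h a b hab⟩⟩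

/-- An `H`-path `a w b` gives edges `aw`, `wb` of `G` adjacent in `P(G)` exactly when `ab ∉ E_G`. -/
theorem isIndepSetIn_auxGraph_iff (hsub : H ≤ G) :
    IsIndepSetIn (auxGraph G) {e : G.edgeSet | (e : Sym2 V) ∈ H.edgeSet} ↔
      ∀ ⦃a w b⦄, a ≠ b → H.Adj a w → H.Adj w b → G.Adj a b := by
  constructor
  · intro hind a w b hab haw hwb
    by_contra hG
    have hne : s(a, w) ≠ s(w, b) := by
      rw [Ne, Sym2.eq_iff, not_or]
      exact ⟨fun h => haw.ne h.1, fun h => hab h.1⟩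
    exact hind (x := ⟨s(a, w), hsub haw⟩) haw (y := ⟨s(w, b), hsub hwb⟩) hwb
      (fun h => hne (congrArg Subtype.val h)) ⟨a, w, b, haw.ne, hwb.ne, hab, rfl, rfl, hG⟩
  · rintro hclosed e₁ he₁ e₂ he₂ - ⟨a, w, b, -, -, hab, h₁, h₂, hG⟩
    rw [Set.mem_ofPred_eq, h₁, mem_edgeSet] at he₁
    rw [Set.mem_ofPred_eq, h₂, mem_edgeSet] at he₂
    exact hG (hclosed hab he₁ he₂)

end

/-- Lemma 6: a spanning subgraph `H` of `G` is a square root of `G` iff the edge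
set of `H` is an independent set of the auxiliary graph `P(G)` and every two
vertices adjacent in `G` are at distance at most 2 in `H`. -/
theorem squareRoot_iff_indepSet_and_dist_le_two (G H : SimpleGraph V) (hsub : H ≤ G) :
    IsSquareRoot H G ↔
      (IsIndepSetIn (auxGraph G) {e : G.edgeSet | (e : Sym2 V) ∈ H.edgeSet} ∧
       ∀ a b : V, G.Adj a b → (H.Adj a b ∨ ∃ w, H.Adj a w ∧ H.Adj w b)) := by
  rw [IsSquareRoot, le_antisymm_iff, squareGraph_le_iff, le_squareGraph_iff,
    isIndepSetIn_auxGraph_iff hsub, and_iff_right hsub]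
end
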